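/- arXiv:1401.3139 — 2 statements merged into one kernel-verified Lean document; each statement's English description precedes it below -/
import Mathlib

section
/- Let U ⊆ B(K₁,K₂) be a weak* closed subspace and let A ⊆ B(K₁), B ⊆ B(K₂) be von Neumann algebras such that B·U·A ⊆ U. Then for every T ∈ B(K₁,K₂), r_U(T) = sup { ‖QTP‖ : Q a projection in B′, P a projection in A′, Q U P = 0 }. -/
open scoped InnerProductSpace
open ContinuousLinearMap

/-- `r_U(T)`: the supremum of `|⟨Tξ,η⟩|` over unit vectors `ξ, η` annihilating `U`. -/
noncomputable def rU {H K : Type*} [NormedAddCommGroup H] [InnerProductSpace ℂ H]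
    [NormedAddCommGroup K] [InnerProductSpace ℂ K]
    (U : Set (H →L[ℂ] K)) (T : H →L[ℂ] K) : ℝ :=
  sSup {c : ℝ | ∃ ξ : H, ∃ η : K, ‖ξ‖ = 1 ∧ ‖η‖ = 1 ∧
    (∀ X ∈ U, ⟪X ξ, η⟫_ℂ = 0) ∧ c = ‖(⟪T ξ, η⟫_ℂ)‖}

/-- An orthogonal projection: a self-adjoint idempotent. -/
def IsProjection {K : Type*} [NormedAddCommGroup K] [InnerProductSpace ℂ K] [CompleteSpace K]
    (P : K →L[ℂ] K) : Prop :=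
  IsSelfAdjoint P ∧ P ∘L P = P

/-- A set of operators is weak* closed (equivalently, for linear subspaces, closed in the
weak operator topology). -/
def IsWeakStarClosed {H K : Type*} [NormedAddCommGroup H] [InnerProductSpace ℂ H]
    [NormedAddCommGroup K] [InnerProductSpace ℂ K] (U : Set (H →L[ℂ] K)) : Prop :=
  IsClosed ((ContinuousLinearMapWOT.ofCLM : (H →L[ℂ] K) → (H →WOT[ℂ] K)) '' U)

/-!
If unit vectors `ξ, η` annihilate `U`, then so do the cyclic subspaces `[𝒜ξ]` and `[ℬη]`, because
`⟪X (A ξ), B η⟫ = ⟪(B⋆ X A) ξ, η⟫` and `B⋆ X A ∈ U`. Their projections `P ∈ 𝒜'`, `Q ∈ ℬ'` thus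
satisfy `Q U P = 0`, and `⟪T ξ, η⟫ = ⟪Q T P ξ, η⟫` is bounded by `‖Q T P‖`.
Conversely, if `Q U P = 0`, then for every `x` the vectors `P x` and `Q T P x` annihilate `U`, and
`⟪T P x, Q T P x⟫ = ‖Q T P x‖²`, so `‖Q T P x‖ ≤ r_U(T) ‖x‖`.
-/

theorem ContinuousLinearMap.norm_inner_apply_le {H K : Type*}
    [NormedAddCommGroup H] [InnerProductSpace ℂ H] [NormedAddCommGroup K] [InnerProductSpace ℂ K]
    (A : H →L[ℂ] K) (x : H) (y : K) : ‖⟪A x, y⟫_ℂ‖ ≤ ‖A‖ * ‖x‖ * ‖y‖ :=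
  (norm_inner_le_norm _ _).trans (by gcongr; exact A.le_opNorm x)

namespace IsProjection

variable {K : Type*} [NormedAddCommGroup K] [InnerProductSpace ℂ K] [CompleteSpace K]
  {P : K →L[ℂ] K}

theorem zero : IsProjection (0 : K →L[ℂ] K) :=
  ⟨.zero _, zero_comp _⟩

theorem isStarProjection (hP : IsProjection P) : IsStarProjection P :=
  ⟨hP.2, hP.1⟩

theorem norm_apply_le (hP : IsProjection P) (x : K) : ‖P x‖ ≤ ‖x‖ :=
  (P.le_opNorm x).trans <| mul_le_of_le_one_left (norm_nonneg x) hP.isStarProjection.norm_le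

theorem apply_apply (hP : IsProjection P) (x : K) : P (P x) = P x :=
  congr($(hP.2) x)

theorem inner_apply_left (hP : IsProjection P) (x y : K) : ⟪P x, y⟫_ℂ = ⟪x, P y⟫_ℂ :=
  hP.1.isSymmetric x y

end IsProjection

theorem isProjection_starProjection {K : Type*} [NormedAddCommGroup K] [InnerProductSpace ℂ K]
    [CompleteSpace K] (V : Submodule ℂ K) [V.HasOrthogonalProjection] :
    IsProjection V.starProjection :=
  ⟨isSelfAdjoint_starProjection V, V.isIdempotentElem_starProjection⟩

section CyclicSubspace

variable {K : Type*} [NormedAddCommGroup K] [InnerProductSpace ℂ K] [CompleteSpace K]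

noncomputable def orbit (𝒜 : VonNeumannAlgebra K) (ξ : K) : Submodule ℂ K :=
  𝒜.toStarSubalgebra.toSubalgebra.toSubmodule.map (ContinuousLinearMap.apply ℂ K ξ).toLinearMap

theorem mem_orbit {𝒜 : VonNeumannAlgebra K} {ξ x : K} : x ∈ orbit 𝒜 ξ ↔ ∃ A ∈ 𝒜, A ξ = x :=
  Iff.rfl

noncomputable def cyclicSubspace (𝒜 : VonNeumannAlgebra K) (ξ : K) : Submodule ℂ K :=
  (orbit 𝒜 ξ).topologicalClosure

instance (𝒜 : VonNeumannAlgebra K) (ξ : K) : CompleteSpace (cyclicSubspace 𝒜 ξ) :=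
  (Submodule.isClosed_topologicalClosure _).completeSpace_coe

theorem mem_cyclicSubspace_self (𝒜 : VonNeumannAlgebra K) (ξ : K) : ξ ∈ cyclicSubspace 𝒜 ξ :=
  Submodule.le_topologicalClosure _ (mem_orbit.mpr ⟨1, one_mem 𝒜, rfl⟩)

theorem starProjection_cyclicSubspace_apply_self (𝒜 : VonNeumannAlgebra K) (ξ : K) :
    (cyclicSubspace 𝒜 ξ).starProjection ξ = ξ :=
  Submodule.starProjection_eq_self_iff.mpr (mem_cyclicSubspace_self 𝒜 ξ)

theorem cyclicSubspace_mem_invtSubmodule {𝒜 : VonNeumannAlgebra K} (ξ : K)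
    {A : K →L[ℂ] K} (hA : A ∈ 𝒜) :
    cyclicSubspace 𝒜 ξ ∈ Module.End.invtSubmodule A.toLinearMap := by
  rw [Module.End.mem_invtSubmodule_iff_forall_mem_of_mem]
  intro x hx
  refine map_mem_closure A.continuous hx ?_
  rintro _ ⟨B, hB, rfl⟩
  exact mem_orbit.mpr ⟨A * B, mul_mem hA hB, rfl⟩

theorem starProjection_cyclicSubspace_mem_commutant (𝒜 : VonNeumannAlgebra K) (ξ : K) :
    (cyclicSubspace 𝒜 ξ).starProjection ∈ 𝒜.commutant := by
  refine (VonNeumannAlgebra.IsStarProjection.mem_iff isStarProjection_starProjection _).mpr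
    fun A hA => ?_
  rw [VonNeumannAlgebra.commutant_commutant] at hA
  simpa using cyclicSubspace_mem_invtSubmodule ξ hA

end CyclicSubspace

section Bimodule

variable {K₁ K₂ : Type*}
  [NormedAddCommGroup K₁] [InnerProductSpace ℂ K₁] [CompleteSpace K₁]
  [NormedAddCommGroup K₂] [InnerProductSpace ℂ K₂] [CompleteSpace K₂]
  {𝒜 : VonNeumannAlgebra K₁} {ℬ : VonNeumannAlgebra K₂} {U : Submodule ℂ (K₁ →L[ℂ] K₂)}
  {ξ : K₁} {η : K₂}

theorem inner_apply_eq_zero_of_mem_cyclicSubspace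
    (hmod : ∀ B ∈ ℬ, ∀ X ∈ U, ∀ A ∈ 𝒜, B ∘L X ∘L A ∈ U)
    (hann : ∀ X ∈ U, ⟪X ξ, η⟫_ℂ = 0) {X : K₁ →L[ℂ] K₂} (hX : X ∈ U)
    {v : K₁} (hv : v ∈ cyclicSubspace 𝒜 ξ) {w : K₂} (hw : w ∈ cyclicSubspace ℬ η) :
    ⟪X v, w⟫_ℂ = 0 := by
  have horbit : ∀ a ∈ orbit 𝒜 ξ, ∀ b ∈ orbit ℬ η, ⟪X a, b⟫_ℂ ∈ ({0} : Set ℂ) := by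
    simp only [mem_orbit]
    rintro _ ⟨A, hA, rfl⟩ _ ⟨B, hB, rfl⟩
    rw [Set.mem_singleton_iff, ← adjoint_inner_left, ← star_eq_adjoint]
    exact hann _ (hmod _ (star_mem hB) X hX A hA)
  simpa using map_mem_closure₂ (f := fun v w => ⟪X v, w⟫_ℂ) (by fun_prop) hv hw horbit

theorem starProjection_cyclicSubspace_comp_comp_eq_zero
    (hmod : ∀ B ∈ ℬ, ∀ X ∈ U, ∀ A ∈ 𝒜, B ∘L X ∘L A ∈ U)
    (hann : ∀ X ∈ U, ⟪X ξ, η⟫_ℂ = 0) {X : K₁ →L[ℂ] K₂} (hX : X ∈ U) :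
    (cyclicSubspace ℬ η).starProjection ∘L X ∘L (cyclicSubspace 𝒜 ξ).starProjection = 0 := by
  ext x
  refine (Submodule.starProjection_apply_eq_zero_iff _).mpr fun w hw => ?_
  rw [inner_eq_zero_symm]
  exact inner_apply_eq_zero_of_mem_cyclicSubspace hmod hann hX
    (Submodule.starProjection_apply_mem _ x) hw

theorem norm_inner_le_norm_compress_cyclicSubspace (T : K₁ →L[ℂ] K₂) (hξ : ‖ξ‖ = 1)
    (hη : ‖η‖ = 1) :
    ‖⟪T ξ, η⟫_ℂ‖ ≤
      ‖(cyclicSubspace ℬ η).starProjection ∘L T ∘L (cyclicSubspace 𝒜 ξ).starProjection‖ := by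
  set P := (cyclicSubspace 𝒜 ξ).starProjection
  set Q := (cyclicSubspace ℬ η).starProjection
  have hcompress : ⟪(Q ∘L T ∘L P) ξ, η⟫_ℂ = ⟪T ξ, η⟫_ℂ := by
    rw [comp_apply, comp_apply, starProjection_cyclicSubspace_apply_self,
      (isProjection_starProjection _).inner_apply_left, starProjection_cyclicSubspace_apply_self]
  calc ‖⟪T ξ, η⟫_ℂ‖ = ‖⟪(Q ∘L T ∘L P) ξ, η⟫_ℂ‖ := by rw [hcompress]
    _ ≤ ‖Q ∘L T ∘L P‖ * ‖ξ‖ * ‖η‖ := (Q ∘L T ∘L P).norm_inner_apply_le ξ η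
    _ = ‖Q ∘L T ∘L P‖ := by rw [hξ, hη, mul_one, mul_one]

end Bimodule

section rU

variable {H K : Type*} [NormedAddCommGroup H] [InnerProductSpace ℂ H]
  [NormedAddCommGroup K] [InnerProductSpace ℂ K] (U : Set (H →L[ℂ] K)) (T : H →L[ℂ] K)

theorem rU_nonneg : 0 ≤ rU U T :=
  Real.sSup_nonneg (by rintro _ ⟨ξ, η, -, -, -, rfl⟩; exact norm_nonneg _)

theorem norm_inner_le_rU {ξ : H} {η : K} (hξ : ‖ξ‖ = 1) (hη : ‖η‖ = 1)
    (hann : ∀ X ∈ U, ⟪X ξ, η⟫_ℂ = 0) : ‖⟪T ξ, η⟫_ℂ‖ ≤ rU U T := by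
  refine le_csSup ⟨‖T‖, ?_⟩ ⟨ξ, η, hξ, hη, hann, rfl⟩
  rintro _ ⟨ξ, η, hξ, hη, -, rfl⟩
  simpa [hξ, hη] using T.norm_inner_apply_le ξ η

theorem norm_inner_le_rU_mul {ξ : H} {η : K} (hann : ∀ X ∈ U, ⟪X ξ, η⟫_ℂ = 0) :
    ‖⟪T ξ, η⟫_ℂ‖ ≤ rU U T * (‖ξ‖ * ‖η‖) := by
  rcases eq_or_ne ξ 0 with rfl | hξ
  · simp
  rcases eq_or_ne η 0 with rfl | hη
  · simp
  have key := norm_inner_le_rU U T (norm_smul_inv_norm (𝕜 := ℂ) hξ)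
    (norm_smul_inv_norm (𝕜 := ℂ) hη)
    (fun X hX => by simp [hann X hX])
  simp only [map_smul, inner_smul_left, inner_smul_right, norm_mul, RCLike.norm_conj, norm_inv,
    RCLike.norm_ofReal, abs_norm] at key
  have hξ₀ := norm_pos_iff.mpr hξ
  have hη₀ := norm_pos_iff.mpr hη
  calc ‖⟪T ξ, η⟫_ℂ‖ = ‖η‖⁻¹ * (‖ξ‖⁻¹ * ‖⟪T ξ, η⟫_ℂ‖) * (‖ξ‖ * ‖η‖) := by field_simp
    _ ≤ rU U T * (‖ξ‖ * ‖η‖) := by gcongr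

end rU

theorem norm_compress_le_rU {K₁ K₂ : Type*}
    [NormedAddCommGroup K₁] [InnerProductSpace ℂ K₁] [CompleteSpace K₁]
    [NormedAddCommGroup K₂] [InnerProductSpace ℂ K₂] [CompleteSpace K₂]
    {P : K₁ →L[ℂ] K₁} {Q : K₂ →L[ℂ] K₂} (hQ : IsProjection Q) (hP : IsProjection P)
    {U : Set (K₁ →L[ℂ] K₂)} (hQUP : ∀ X ∈ U, Q ∘L X ∘L P = 0) (T : K₁ →L[ℂ] K₂) :
    ‖Q ∘L T ∘L P‖ ≤ rU U T := by
  refine opNorm_le_bound _ (rU_nonneg U T) fun x => ?_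
  show ‖Q (T (P x))‖ ≤ rU U T * ‖x‖
  have hann : ∀ X ∈ U, ⟪X (P x), Q (T (P x))⟫_ℂ = 0 := fun X hX => by
    rw [← hQ.inner_apply_left]
    exact congr(⟪$(hQUP X hX) x, T (P x)⟫_ℂ).trans (inner_zero_left _)
  have key : ‖Q (T (P x))‖ * ‖Q (T (P x))‖ ≤ rU U T * ‖x‖ * ‖Q (T (P x))‖ :=
    calc ‖Q (T (P x))‖ * ‖Q (T (P x))‖ = ‖⟪T (P x), Q (T (P x))⟫_ℂ‖ := by
          rw [← hQ.apply_apply, ← hQ.inner_apply_left, hQ.apply_apply,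
            inner_self_eq_norm_sq_to_K]
          simp [sq]
      _ ≤ rU U T * (‖P x‖ * ‖Q (T (P x))‖) := norm_inner_le_rU_mul U T hann
      _ ≤ rU U T * ‖x‖ * ‖Q (T (P x))‖ := by
        rw [← mul_assoc]; gcongr; exacts [rU_nonneg U T, hP.norm_apply_le x]
  rcases (norm_nonneg (Q (T (P x)))).eq_or_lt with hy₀ | hy₀
  · rw [← hy₀]
    exact mul_nonneg (rU_nonneg U T) (norm_nonneg x)
  · exact le_of_mul_le_mul_right key hy₀

theorem rU_eq_sSup_norm_compress_general {K₁ K₂ : Type*}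
    [NormedAddCommGroup K₁] [InnerProductSpace ℂ K₁] [CompleteSpace K₁]
    [NormedAddCommGroup K₂] [InnerProductSpace ℂ K₂] [CompleteSpace K₂]
    (𝒜 : VonNeumannAlgebra K₁) (ℬ : VonNeumannAlgebra K₂)
    (U : Submodule ℂ (K₁ →L[ℂ] K₂))
    (hmod : ∀ B ∈ ℬ, ∀ X ∈ U, ∀ A ∈ 𝒜, B ∘L X ∘L A ∈ U)
    (T : K₁ →L[ℂ] K₂) :
    rU (U : Set (K₁ →L[ℂ] K₂)) T =
      sSup {c : ℝ | ∃ Q : K₂ →L[ℂ] K₂, ∃ P : K₁ →L[ℂ] K₁,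
        IsProjection Q ∧ Q ∈ ℬ.commutant ∧ IsProjection P ∧ P ∈ 𝒜.commutant ∧
        (∀ X ∈ U, Q ∘L X ∘L P = 0) ∧ c = ‖Q ∘L T ∘L P‖} := by
  set S := {c : ℝ | ∃ Q : K₂ →L[ℂ] K₂, ∃ P : K₁ →L[ℂ] K₁,
        IsProjection Q ∧ Q ∈ ℬ.commutant ∧ IsProjection P ∧ P ∈ 𝒜.commutant ∧
        (∀ X ∈ U, Q ∘L X ∘L P = 0) ∧ c = ‖Q ∘L T ∘L P‖}
  have hS : rU U T ∈ upperBounds S := by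
    rintro _ ⟨Q, P, hQ, -, hP, -, hQUP, rfl⟩
    exact norm_compress_le_rU hQ hP hQUP T
  refine le_antisymm (Real.sSup_le ?_ (Real.sSup_nonneg ?_))
    (csSup_le ⟨0, 0, 0, .zero, zero_mem _, .zero, zero_mem _, by simp, by simp⟩
      fun _ hc => hS hc)
  · rintro _ ⟨ξ, η, hξ, hη, hann, rfl⟩
    exact (norm_inner_le_norm_compress_cyclicSubspace T hξ hη).trans <|
      le_csSup ⟨rU U T, hS⟩ ⟨_, _, isProjection_starProjection _,
        starProjection_cyclicSubspace_mem_commutant ℬ η, isProjection_starProjection _,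
        starProjection_cyclicSubspace_mem_commutant 𝒜 ξ,
        fun _ hX => starProjection_cyclicSubspace_comp_comp_eq_zero hmod hann hX, rfl⟩
  · rintro _ ⟨Q, P, -, -, -, -, -, rfl⟩
    exact norm_nonneg _

/-- Lemma 1.3: if `U` is a weak* closed subspace which is a `ℬ`–`𝒜` bimodule over
von Neumann algebras `ℬ, 𝒜`, then `r_U(T)` is the supremum of `‖QTP‖` over projections
`Q ∈ ℬ'`, `P ∈ 𝒜'` with `Q U P = 0`. -/
theorem rU_eq_sSup_norm_compress {K₁ K₂ : Type*}
    [NormedAddCommGroup K₁] [InnerProductSpace ℂ K₁] [CompleteSpace K₁]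
    [NormedAddCommGroup K₂] [InnerProductSpace ℂ K₂] [CompleteSpace K₂]
    (𝒜 : VonNeumannAlgebra K₁) (ℬ : VonNeumannAlgebra K₂)
    (U : Submodule ℂ (K₁ →L[ℂ] K₂))
    (hclosed : IsWeakStarClosed (U : Set (K₁ →L[ℂ] K₂)))
    (hmod : ∀ B ∈ ℬ, ∀ X ∈ U, ∀ A ∈ 𝒜, B ∘L X ∘L A ∈ U)
    (T : K₁ →L[ℂ] K₂) :
    rU (U : Set (K₁ →L[ℂ] K₂)) T =
      sSup {c : ℝ | ∃ Q : K₂ →L[ℂ] K₂, ∃ P : K₁ →L[ℂ] K₁,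
        IsProjection Q ∧ Q ∈ ℬ.commutant ∧ IsProjection P ∧ P ∈ 𝒜.commutant ∧
        (∀ X ∈ U, Q ∘L X ∘L P = 0) ∧ c = ‖Q ∘L T ∘L P‖} :=
  rU_eq_sSup_norm_compress_general 𝒜 ℬ U hmod T
end

section
/- Let U ⊆ B(H,K) and W ⊆ B(H,K') be subspaces, and N ∈ B(K,K') with N*N = I_K, N U ⊆ W, and N* W ⊆ U (so U = N* W). Then for every T ∈ B(H,K): d(T,U) ≤ d(NT, W). Moreover if additionally r_W(NT) ≤ r_U(T) and d(S,W) ≤ k·r_W(S) for all S ∈ B(H,K'), then d(T,U) ≤ k·r_U(T); i.e., hyperreflexivity with constant k passes from W to U = N*W. -/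
open scoped InnerProductSpace
open ContinuousLinearMap

lemma rU_bdd {H K : Type*} [NormedAddCommGroup H] [InnerProductSpace ℂ H]
    [NormedAddCommGroup K] [InnerProductSpace ℂ K]
    (U : Set (H →L[ℂ] K)) (T : H →L[ℂ] K) :
    BddAbove {c : ℝ | ∃ ξ : H, ∃ η : K, ‖ξ‖ = 1 ∧ ‖η‖ = 1 ∧
      (∀ X ∈ U, ⟪X ξ, η⟫_ℂ = 0) ∧ c = ‖(⟪T ξ, η⟫_ℂ)‖} := by
  refine ⟨‖T‖, fun c hc => ?_⟩
  obtain ⟨ξ, η, hξ, hη, -, rfl⟩ := hc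
  calc ‖(⟪T ξ, η⟫_ℂ)‖ ≤ ‖T ξ‖ * ‖η‖ := norm_inner_le_norm _ _
    _ ≤ ‖T‖ * ‖ξ‖ * ‖η‖ := by
        gcongr; exact T.le_opNorm ξ
    _ = ‖T‖ := by rw [hξ, hη]; ring

lemma rU_nonneg_s14 {H K : Type*} [NormedAddCommGroup H] [InnerProductSpace ℂ H]
    [NormedAddCommGroup K] [InnerProductSpace ℂ K]
    (U : Set (H →L[ℂ] K)) (T : H →L[ℂ] K) : 0 ≤ rU U T := by
  set A := {c : ℝ | ∃ ξ : H, ∃ η : K, ‖ξ‖ = 1 ∧ ‖η‖ = 1 ∧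
      (∀ X ∈ U, ⟪X ξ, η⟫_ℂ = 0) ∧ c = ‖(⟪T ξ, η⟫_ℂ)‖} with hA
  rcases A.eq_empty_or_nonempty with h | ⟨c, hc⟩
  · rw [rU, ← hA, h, Real.sSup_empty]
  · have hc0 : 0 ≤ c := by obtain ⟨ξ, η, -, -, -, rfl⟩ := hc; positivity
    exact hc0.trans (le_csSup (rU_bdd U T) hc)

/-- If `N` is an isometry with `N·U ⊆ W` and `N*·W ⊆ U`, then `d(T,U) ≤ d(NT,W)` for all
`T`; moreover, if `r_W(NT) ≤ r_U(T)` and `W` is hyperreflexive with constant `k`, then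
`d(T,U) ≤ k·r_U(T)`, i.e. hyperreflexivity passes from `W` to `U = N*W`. -/
theorem hyperreflexivity_transfer {H K K' : Type*}
    [NormedAddCommGroup H] [InnerProductSpace ℂ H] [CompleteSpace H]
    [NormedAddCommGroup K] [InnerProductSpace ℂ K] [CompleteSpace K]
    [NormedAddCommGroup K'] [InnerProductSpace ℂ K'] [CompleteSpace K']
    (U : Submodule ℂ (H →L[ℂ] K)) (W : Submodule ℂ (H →L[ℂ] K'))
    (N : K →L[ℂ] K')
    (hisom : adjoint N ∘L N = 1)
    (hNU : ∀ X ∈ U, N ∘L X ∈ W)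
    (hNW : ∀ S ∈ W, adjoint N ∘L S ∈ U) :
    (∀ T : H →L[ℂ] K,
      Metric.infDist T (U : Set (H →L[ℂ] K)) ≤
        Metric.infDist (N ∘L T) (W : Set (H →L[ℂ] K'))) ∧
    (∀ k : ℝ,
      (∀ T : H →L[ℂ] K, rU (W : Set (H →L[ℂ] K')) (N ∘L T) ≤ rU (U : Set (H →L[ℂ] K)) T) →
      (∀ S : H →L[ℂ] K', Metric.infDist S (W : Set (H →L[ℂ] K')) ≤
          k * rU (W : Set (H →L[ℂ] K')) S) →
      ∀ T : H →L[ℂ] K,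
        Metric.infDist T (U : Set (H →L[ℂ] K)) ≤ k * rU (U : Set (H →L[ℂ] K)) T) := by
  -- pointwise identity N*(N x) = x
  have hpt : ∀ x : K, adjoint N (N x) = x := fun x => by
    have := congrArg (fun f : K →L[ℂ] K => f x) hisom
    simpa using this
  -- N is isometric
  have hnorm : ∀ x : K, ‖N x‖ = ‖x‖ := by
    intro x
    have h1 : ⟪N x, N x⟫_ℂ = ⟪x, x⟫_ℂ := by
      rw [← ContinuousLinearMap.adjoint_inner_left, hpt]
    have h3 : ‖N x‖ ^ 2 = ‖x‖ ^ 2 := by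
      have h2 : RCLike.re ⟪N x, N x⟫_ℂ = RCLike.re ⟪x, x⟫_ℂ := by rw [h1]
      rwa [@inner_self_eq_norm_sq ℂ, @inner_self_eq_norm_sq ℂ] at h2
    nlinarith [norm_nonneg (N x), norm_nonneg x]
  have hNle : ‖N‖ ≤ 1 := N.opNorm_le_bound zero_le_one (fun x => by rw [hnorm]; simp)
  have hNadj : ‖adjoint N‖ ≤ 1 := le_trans (le_of_eq ((ContinuousLinearMap.adjoint : (K →L[ℂ] K') ≃ₗᵢ⋆[ℂ] _).norm_map N)) hNle
  -- part 1
  have part1 : ∀ T : H →L[ℂ] K,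
      Metric.infDist T (U : Set (H →L[ℂ] K)) ≤
        Metric.infDist (N ∘L T) (W : Set (H →L[ℂ] K')) := by
    intro T
    haveI hne : Nonempty (W : Set (H →L[ℂ] K')) := ⟨0, W.zero_mem⟩
    rw [Metric.infDist_eq_iInf (x := N ∘L T)]
    refine le_ciInf fun Sp => ?_
    obtain ⟨S, hS⟩ := Sp
    have hmem : adjoint N ∘L S ∈ U := hNW S hS
    have key : T - adjoint N ∘L S = adjoint N ∘L (N ∘L T - S) := by
      rw [ContinuousLinearMap.comp_sub, ← ContinuousLinearMap.comp_assoc, hisom]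
      rfl
    calc Metric.infDist T (U : Set (H →L[ℂ] K)) ≤ dist T (adjoint N ∘L S) :=
          Metric.infDist_le_dist_of_mem hmem
      _ = ‖T - adjoint N ∘L S‖ := dist_eq_norm _ _
      _ = ‖adjoint N ∘L (N ∘L T - S)‖ := by rw [key]
      _ ≤ ‖adjoint N‖ * ‖N ∘L T - S‖ := opNorm_comp_le _ _
      _ ≤ 1 * ‖N ∘L T - S‖ := by gcongr
      _ = dist (N ∘L T) S := by rw [one_mul, dist_eq_norm]
  refine ⟨part1, fun k hrle hk T => ?_⟩
  -- r_U(T) ≤ r_W(N∘T)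
  have hle2 : rU (U : Set (H →L[ℂ] K)) T ≤ rU (W : Set (H →L[ℂ] K')) (N ∘L T) := by
    apply Real.sSup_le _ (rU_nonneg_s14 _ _)
    rintro c ⟨ξ, η, hξ, hη, hann, rfl⟩
    have hmem : ‖(⟪T ξ, η⟫_ℂ)‖ ∈ {c : ℝ | ∃ ξ' : H, ∃ η' : K', ‖ξ'‖ = 1 ∧ ‖η'‖ = 1 ∧
        (∀ X ∈ (W : Set (H →L[ℂ] K')), ⟪X ξ', η'⟫_ℂ = 0) ∧ c = ‖(⟪(N ∘L T) ξ', η'⟫_ℂ)‖} := by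
      refine ⟨ξ, N η, hξ, by rw [hnorm, hη], fun S hS => ?_, ?_⟩
      · rw [← ContinuousLinearMap.adjoint_inner_left]
        exact hann _ (hNW S hS)
      · rw [ContinuousLinearMap.comp_apply, ← ContinuousLinearMap.adjoint_inner_left, hpt]
    exact le_csSup (rU_bdd _ _) hmem
  have heq : rU (W : Set (H →L[ℂ] K')) (N ∘L T) = rU (U : Set (H →L[ℂ] K)) T :=
    le_antisymm (hrle T) hle2
  calc Metric.infDist T (U : Set (H →L[ℂ] K))
      ≤ Metric.infDist (N ∘L T) (W : Set (H →L[ℂ] K')) := part1 T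
    _ ≤ k * rU (W : Set (H →L[ℂ] K')) (N ∘L T) := hk _
    _ = k * rU (U : Set (H →L[ℂ] K)) T := by rw [heq]
end
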